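/- arXiv:1209.4474 — 8 statements merged into one kernel-verified Lean document; each statement's English description precedes it below -/
import Mathlib

section
/- For a prime p ≥ 5, K_{p,3} = (p²-1)/24. -/
/-!
As `(1 + X)^p - 1 - X^p` has no constant term and its coefficients below `X^p` are the binomial
coefficients `choose p k`, comparing the coefficients of `X^1, …, X^4` in `Q * ((1 + X)^p - 1 - X^p)
= -p X` gives a triangular linear system for the first four coefficients of `Q`, with diagonal `p`.
Solving it successively gives `-1`, `(p - 1)/2`, `-(p² - 1)/12` and `(p² - 1)/24`.
-/

open PowerSeries Finset

section

variable {R : Type*} [CommRing R]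

theorem PowerSeries.coeff_one_add_X_pow_sub_one_sub_X_pow (p n : ℕ) :
    coeff n ((1 + X) ^ p - 1 - X ^ p : R⟦X⟧)
      = p.choose n - (if n = 0 then 1 else 0) - (if n = p then 1 else 0) := by
  have hcoe : ((1 + X) ^ p : R⟦X⟧) = ((1 + Polynomial.X) ^ p : Polynomial R) := by simp
  rw [map_sub, map_sub, coeff_one, coeff_X_pow, hcoe, Polynomial.coeff_coe,
    Polynomial.coeff_one_add_X_pow]

theorem PowerSeries.coeff_mul_one_add_X_pow_sub_one_sub_X_pow {p n : ℕ} (hn : n < p)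
    (Q : R⟦X⟧) :
    coeff n (Q * ((1 + X) ^ p - 1 - X ^ p))
      = ∑ i ∈ range n, coeff i Q * p.choose (n - i) := by
  rw [coeff_mul, Nat.sum_antidiagonal_eq_sum_range_succ (fun i j => coeff i Q * coeff j _),
    sum_range_succ, Nat.sub_self, coeff_one_add_X_pow_sub_one_sub_X_pow, if_pos rfl,
    if_neg (by omega), Nat.choose_zero_right, Nat.cast_one, sub_self, zero_sub, neg_zero,
    mul_zero, add_zero]
  refine sum_congr rfl fun i hi => ?_
  have hi : i < n := mem_range.mp hi
  rw [coeff_one_add_X_pow_sub_one_sub_X_pow, if_neg (by omega), if_neg (by omega), sub_zero,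
    sub_zero]

end

theorem stmt_3_general (p : ℕ) (hp5 : 5 ≤ p)
    (Q : PowerSeries ℚ)
    (hQ : Q * ((1 + PowerSeries.X) ^ p - 1 - PowerSeries.X ^ p)
        = -(p : PowerSeries ℚ) * PowerSeries.X) :
    PowerSeries.coeff 3 Q = ((p : ℚ) ^ 2 - 1) / 24 := by
  have hrhs : -(p : ℚ⟦X⟧) * X = C (-(p : ℚ)) * X ^ 1 := by
    rw [map_neg, map_natCast, pow_one]
  have hrec (n : ℕ) (hn : n < p) :
      ∑ i ∈ range n, coeff i Q * p.choose (n - i) = if n = 1 then -(p : ℚ) else 0 := by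
    rw [← coeff_mul_one_add_X_pow_sub_one_sub_X_pow hn, hQ, hrhs, coeff_C_mul_X_pow]
  have e1 := hrec 1 (by omega)
  have e2 := hrec 2 (by omega)
  have e3 := hrec 3 (by omega)
  have e4 := hrec 4 (by omega)
  simp only [sum_range_succ, range_one, sum_singleton, coeff_zero_eq_constantCoeff,
    Nat.cast_choose_eq_descPochhammer_div, descPochhammer_succ_eval, descPochhammer_one,
    Polynomial.eval_X, Nat.factorial, Nat.cast_ofNat, Nat.cast_one, div_one, tsub_zero,
    Nat.add_one_sub_one, Nat.reduceSub, OfNat.ofNat_ne_one, ↓reduceIte, mul_one] at e1 e2 e3 e4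
  have hp0 : (p : ℚ) ≠ 0 := by positivity
  have q0 : constantCoeff Q = -1 := mul_right_cancel₀ hp0 (by linear_combination e1)
  have q1 : coeff 1 Q = ((p : ℚ) - 1) / 2 :=
    mul_right_cancel₀ hp0 (by linear_combination e2 - (p * (p - 1) / 2 : ℚ) * q0)
  have q2 : coeff 2 Q = -((p : ℚ) ^ 2 - 1) / 12 :=
    mul_right_cancel₀ hp0 (by
      linear_combination e3 - (p * (p - 1) * (p - 2) / 6 : ℚ) * q0 - (p * (p - 1) / 2 : ℚ) * q1)
  refine mul_right_cancel₀ hp0 ?_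
  linear_combination e4 - (p * (p - 1) * (p - 2) * (p - 3) / 24 : ℚ) * q0
    - (p * (p - 1) * (p - 2) / 6 : ℚ) * q1 - (p * (p - 1) / 2 : ℚ) * q2

/-- For a prime `p ≥ 5`, `K_{p,3} = (p²-1)/24`. -/
theorem stmt_3 (p : ℕ) (hp : p.Prime) (hp5 : 5 ≤ p)
    (Q : PowerSeries ℚ)
    (hQ : Q * ((1 + PowerSeries.X) ^ p - 1 - PowerSeries.X ^ p)
        = -(p : PowerSeries ℚ) * PowerSeries.X) :
    PowerSeries.coeff 3 Q = ((p : ℚ) ^ 2 - 1) / 24 :=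
  stmt_3_general p hp5 Q hQ
end

section
/- For a prime p ≥ 7, K_{p,4} = (p²-1)(p²-19)/720. -/
/-!
Since `(1 + X) ^ p - 1 - X ^ p = ∑_{0 < k < p} C(p, k) X ^ k`, comparing the coefficients of
`X ^ (n + 1)` for `n + 1 < p` gives a triangular linear system
`∑_{j ≤ n} Q_j C(p, n + 1 - j) = -p [n = 0]` with diagonal entries `p`. Solving it successively
gives `Q_0 = -1`, `Q_1 = (p - 1) / 2`, `Q_2 = -(p² - 1) / 12`, `Q_3 = (p² - 1) / 24`
and then `Q_4`.
-/

namespace PowerSeries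

variable {R : Type*}

theorem coeff_one_add_X_pow [CommSemiring R] (p n : ℕ) :
    coeff n ((1 + X : R⟦X⟧) ^ p) = p.choose n := by
  have : (1 + X : R⟦X⟧) ^ p = ((1 + Polynomial.X) ^ p : Polynomial R) := by simp
  rw [this, Polynomial.coeff_coe, Polynomial.coeff_one_add_X_pow]

section CommRing

variable [CommRing R] {p : ℕ}

theorem constantCoeff_one_add_X_pow_sub_one_sub_X_pow (hp : p ≠ 0) :
    constantCoeff ((1 + X) ^ p - 1 - X ^ p : R⟦X⟧) = 0 := by
  simp [zero_pow hp]

theorem coeff_one_add_X_pow_sub_one_sub_X_pow_s4 {k : ℕ} (hk : k ≠ 0) (hkp : k ≠ p) :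
    coeff k ((1 + X) ^ p - 1 - X ^ p : R⟦X⟧) = p.choose k := by
  simp [coeff_one_add_X_pow, coeff_X_pow, coeff_one, hk, hkp]

theorem coeff_succ_mul_one_add_X_pow_sub_one_sub_X_pow (Q : R⟦X⟧) {n : ℕ} (hn : n + 1 < p) :
    coeff (n + 1) (Q * ((1 + X) ^ p - 1 - X ^ p)) =
      ∑ j ∈ Finset.range (n + 1), coeff j Q * p.choose (n + 1 - j) := by
  rw [coeff_mul, Finset.Nat.sum_antidiagonal_eq_sum_range_succ (fun i j => coeff i Q * coeff j _),
    Finset.sum_range_succ, Nat.sub_self, coeff_zero_eq_constantCoeff,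
    constantCoeff_one_add_X_pow_sub_one_sub_X_pow (by omega), mul_zero, add_zero]
  refine Finset.sum_congr rfl fun j hj => ?_
  rw [coeff_one_add_X_pow_sub_one_sub_X_pow_s4 (by grind) (by grind)]

theorem sum_coeff_mul_choose_of_mul_eq {Q : R⟦X⟧}
    (hQ : Q * ((1 + X) ^ p - 1 - X ^ p) = -(p : R⟦X⟧) * X) {n : ℕ} (hn : n + 1 < p) :
    ∑ j ∈ Finset.range (n + 1), coeff j Q * p.choose (n + 1 - j) =
      if n = 0 then -(p : R) else 0 := by
  rw [← coeff_succ_mul_one_add_X_pow_sub_one_sub_X_pow Q hn, hQ, coeff_succ_mul_X,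
    ← map_natCast C, ← map_neg, coeff_C]

end CommRing

end PowerSeries

open PowerSeries

theorem stmt_4_general (p : ℕ) (hp7 : 7 ≤ p)
    (Q : PowerSeries ℚ)
    (hQ : Q * ((1 + PowerSeries.X) ^ p - 1 - PowerSeries.X ^ p)
        = -(p : PowerSeries ℚ) * PowerSeries.X) :
    PowerSeries.coeff 4 Q = ((p : ℚ) ^ 2 - 1) * ((p : ℚ) ^ 2 - 19) / 720 := by
  have hp : (p : ℚ) ≠ 0 := Nat.cast_ne_zero.mpr (by omega)
  have e0 := sum_coeff_mul_choose_of_mul_eq hQ (n := 0) (by omega)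
  have e1 := sum_coeff_mul_choose_of_mul_eq hQ (n := 1) (by omega)
  have e2 := sum_coeff_mul_choose_of_mul_eq hQ (n := 2) (by omega)
  have e3 := sum_coeff_mul_choose_of_mul_eq hQ (n := 3) (by omega)
  have e4 := sum_coeff_mul_choose_of_mul_eq hQ (n := 4) (by omega)
  simp only [Finset.sum_range_succ, Finset.range_one, Finset.sum_singleton, zero_add,
    Nat.reduceAdd, Nat.reduceSub, Nat.add_one_sub_one, tsub_zero, coeff_zero_eq_constantCoeff,
    Nat.cast_choose_eq_descPochhammer_div, descPochhammer_one, descPochhammer_succ_eval,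
    Polynomial.eval_X, Nat.factorial, Nat.succ_eq_add_one, Nat.reduceMul, Nat.cast_ofNat,
    Nat.cast_one, div_one, mul_one, one_ne_zero, OfNat.ofNat_ne_zero, ↓reduceIte]
    at e0 e1 e2 e3 e4
  have q0 : constantCoeff Q = -1 := mul_right_cancel₀ hp (by linear_combination e0)
  rw [q0] at e1 e2 e3 e4
  have q1 : coeff 1 Q = (p - 1) / 2 := mul_right_cancel₀ hp (by linear_combination e1)
  rw [q1] at e2 e3 e4
  have q2 : coeff 2 Q = -(p ^ 2 - 1) / 12 := mul_right_cancel₀ hp (by linear_combination e2)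
  rw [q2] at e3 e4
  have q3 : coeff 3 Q = (p ^ 2 - 1) / 24 := mul_right_cancel₀ hp (by linear_combination e3)
  rw [q3] at e4
  exact mul_right_cancel₀ hp (by linear_combination e4)

/-- For a prime `p ≥ 7`, `K_{p,4} = (p²-1)(p²-19)/720`. -/
theorem stmt_4 (p : ℕ) (hp : p.Prime) (hp7 : 7 ≤ p)
    (Q : PowerSeries ℚ)
    (hQ : Q * ((1 + PowerSeries.X) ^ p - 1 - PowerSeries.X ^ p)
        = -(p : PowerSeries ℚ) * PowerSeries.X) :
    PowerSeries.coeff 4 Q = ((p : ℚ) ^ 2 - 1) * ((p : ℚ) ^ 2 - 19) / 720 :=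
  stmt_4_general p hp7 Q hQ
end

section
/- For p = 5, the sequence K_{5,n} is periodic with period 6, with K_{5,0},...,K_{5,5} equal to -1, 2, -2, 1, 0, 0 respectively, and K_{5,n+6} = K_{5,n} for all n. -/
/-!
Since `(1 + X)^5 - 1 - X^5 = 5 X (1 + X) (1 + X + X^2)` and
`(1 + X) (1 + X + X^2) (1 - X) (1 - X + X^2) = 1 - X^6`, the series `Q` satisfies
`Q (1 - X^6) = -(1 - X) (1 - X + X^2) = -1 + 2X - 2X^2 + X^3`.
Multiplying by `1 - X^6` takes differences of coefficients six apart, so the coefficients of `Q`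
start with those of this cubic and then repeat with period 6.
-/

open PowerSeries

section
variable {R : Type*} [CommRing R]

theorem coeff_eq_of_mul_one_sub_X_pow_eq {Q P : R⟦X⟧} {k n : ℕ} (h : Q * (1 - X ^ k) = P)
    (hn : n < k) : coeff n Q = coeff n P := by
  rw [← h, mul_one_sub, map_sub, coeff_mul_X_pow', if_neg (by omega), sub_zero]

theorem coeff_add_of_mul_one_sub_X_pow_eq {Q P : R⟦X⟧} {k : ℕ} (h : Q * (1 - X ^ k) = P)
    (n : ℕ) : coeff (n + k) Q = coeff n Q + coeff (n + k) P := by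
  rw [← h, mul_one_sub, map_sub, coeff_mul_X_pow]
  ring

theorem coeff_cubic (a b c d : R) (n : ℕ) :
    coeff n (C a + C b * X + C c * X ^ 2 + C d * X ^ 3 : R⟦X⟧) =
      if n = 0 then a else if n = 1 then b else if n = 2 then c else if n = 3 then d else 0 := by
  rcases n with _ | _ | _ | _ | n <;> simp [coeff_C, coeff_X_pow]

theorem mul_one_sub_X_pow_six_eq [IsDomain R] (h5 : (5 : R) ≠ 0) {Q : R⟦X⟧}
    (hQ : Q * ((1 + X) ^ 5 - 1 - X ^ 5) = -(5 : R⟦X⟧) * X) :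
    Q * (1 - X ^ 6) = C (-1) + C 2 * X + C (-2) * X ^ 2 + C 1 * X ^ 3 := by
  have h5X : (5 : R⟦X⟧) * X ≠ 0 :=
    mul_ne_zero (by rw [← map_ofNat C]; exact (map_ne_zero_iff _ C_injective).mpr h5) X_ne_zero
  have hcubic : Q * ((1 + X) * (1 + X + X ^ 2)) = -1 :=
    mul_left_cancel₀ h5X (by linear_combination hQ)
  simp only [map_neg, map_one, map_ofNat]
  linear_combination (1 - X) * (1 - X + X ^ 2) * hcubic

end

/-- For `p = 5`, the sequence `K_{5,n}` is periodic with period 6, with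
`K_{5,0},...,K_{5,5}` equal to `-1, 2, -2, 1, 0, 0` respectively. -/
theorem stmt_8
    (Q : PowerSeries ℚ)
    (hQ : Q * ((1 + PowerSeries.X) ^ 5 - 1 - PowerSeries.X ^ 5)
        = -(5 : PowerSeries ℚ) * PowerSeries.X) :
    PowerSeries.coeff 0 Q = -1 ∧
    PowerSeries.coeff 1 Q = 2 ∧
    PowerSeries.coeff 2 Q = -2 ∧
    PowerSeries.coeff 3 Q = 1 ∧
    PowerSeries.coeff 4 Q = 0 ∧
    PowerSeries.coeff 5 Q = 0 ∧
    (∀ n : ℕ, PowerSeries.coeff (n + 6) Q = PowerSeries.coeff n Q) := by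
  have hP := mul_one_sub_X_pow_six_eq (by norm_num) hQ
  refine ⟨?_, ?_, ?_, ?_, ?_, ?_, fun n => ?periodic⟩
  case periodic =>
    rw [coeff_add_of_mul_one_sub_X_pow_eq hP, coeff_cubic]
    simp
  all_goals
    rw [coeff_eq_of_mul_one_sub_X_pow_eq hP (by norm_num), coeff_cubic]
    norm_num
end

section
/- For p = 7, the sequence K_{7,n} of coefficients of -7x/((1+x)⁷ - 1 - x⁷) is not periodic (in particular it is unbounded). -/
/-!
Since `(1 + x)⁷ - 1 - x⁷ = 7x(1 + x)(1 + x + x²)²`, the series is `Q = -1 / ((1 + x)(1 + x + x²)²)`.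
Multiplying numerator and denominator by `(1 - x)²(1 - x + x²)` gives
`Q = P / ((1 - x³)(1 - x⁶))` with `P = -1 + 3x - 4x² + 3x³ - x⁴`. Hence `Q (1 - x³) = P / (1 - x⁶)`
has period `6`, and telescoping along multiples of `3` gives `K_{7,6k} = 2k - 1`.
-/

open PowerSeries

theorem one_add_pow_seven_sub_one_sub_pow_seven {A : Type*} [CommRing A] (x : A) :
    (1 + x) ^ 7 - 1 - x ^ 7 = 7 * x * ((1 + x) * (1 + x + x ^ 2) ^ 2) := by
  ring

namespace PowerSeries

variable {R : Type*} [CommRing R]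

theorem coeff_add_eq_of_mul_one_sub_X_pow {f g : R⟦X⟧} {d : ℕ} (h : f * (1 - X ^ d) = g)
    (n : ℕ) : coeff (n + d) f = coeff n f + coeff (n + d) g := by
  rw [← h, mul_sub, mul_one, map_sub, coeff_mul_X_pow f d n]
  ring

theorem coeff_eq_of_mul_one_sub_X_pow_of_lt {f g : R⟦X⟧} {d n : ℕ} (h : f * (1 - X ^ d) = g)
    (hn : n < d) : coeff n f = coeff n g := by
  rw [← h, mul_sub, mul_one, map_sub, coeff_mul_X_pow', if_neg (by omega), sub_zero]

theorem coeff_mul_add_eq_of_mul_one_sub_X_pow {f g : R⟦X⟧} {d : ℕ} (h : f * (1 - X ^ d) = g)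
    (hg : ∀ m, d ≤ m → coeff m g = 0) (k : ℕ) {r : ℕ} (hr : r < d) :
    coeff (d * k + r) f = coeff r g := by
  induction k with
  | zero => simpa using coeff_eq_of_mul_one_sub_X_pow_of_lt h hr
  | succ k ih =>
    rw [show d * (k + 1) + r = d * k + r + d by ring, coeff_add_eq_of_mul_one_sub_X_pow h, ih,
      hg (d * k + r + d) (by omega), add_zero]

theorem mul_eq_neg_one_of_mul_one_add_pow_seven_sub [IsDomain R] [CharZero R] {Q : R⟦X⟧}
    (hQ : Q * ((1 + X) ^ 7 - 1 - X ^ 7) = -(7 : R⟦X⟧) * X) :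
    Q * ((1 + X) * (1 + X + X ^ 2) ^ 2) = -1 := by
  have h7 : (7 : R⟦X⟧) ≠ 0 := by
    rw [← map_ofNat C, ← map_zero C]
    exact C_injective.ne (by norm_num)
  have h7X : (7 : R⟦X⟧) * X ≠ 0 := mul_ne_zero h7 X_ne_zero
  apply mul_left_cancel₀ h7X
  rw [one_add_pow_seven_sub_one_sub_pow_seven] at hQ
  linear_combination hQ

theorem coeff_six_mul_of_mul_eq_neg_one {Q : R⟦X⟧}
    (hQ : Q * ((1 + X) * (1 + X + X ^ 2) ^ 2) = -1) (k : ℕ) :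
    coeff (6 * k) Q = 2 * k - 1 := by
  have hC (n : ℕ) [n.AtLeastTwo] : (OfNat.ofNat n : R⟦X⟧) = C (OfNat.ofNat n) :=
    (map_ofNat C n).symm
  set P : R⟦X⟧ := -1 + 3 * X - 4 * X ^ 2 + 3 * X ^ 3 - X ^ 4
  have hS : Q * (1 - X ^ 3) * (1 - X ^ 6) = P := by
    linear_combination (1 - X) ^ 2 * (1 - X + X ^ 2) * hQ
  have hP : ∀ m, 6 ≤ m → coeff m P = 0 := by
    intro m hm
    simp only [P, hC, map_add, map_sub, map_neg, coeff_one, coeff_C_mul, coeff_X, coeff_X_pow]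
    split_ifs <;> first | omega | simp
  have hS0 (k : ℕ) : coeff (6 * k) (Q * (1 - X ^ 3)) = -1 := by
    simpa [P] using coeff_mul_add_eq_of_mul_one_sub_X_pow hS hP k (r := 0) (by norm_num)
  have hS3 (k : ℕ) : coeff (6 * k + 3) (Q * (1 - X ^ 3)) = 3 := by
    simpa [P, hC, coeff_X_pow] using
      coeff_mul_add_eq_of_mul_one_sub_X_pow hS hP k (r := 3) (by norm_num)
  have hQ0 : coeff 0 Q = -1 := by
    rw [coeff_eq_of_mul_one_sub_X_pow_of_lt rfl (by norm_num : 0 < 3)]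
    simpa using hS0 0
  have hstep (k : ℕ) : coeff (6 * (k + 1)) Q = coeff (6 * k) Q + 2 := by
    have h₁ := coeff_add_eq_of_mul_one_sub_X_pow (rfl : Q * (1 - X ^ 3) = _) (6 * k)
    have h₂ := coeff_add_eq_of_mul_one_sub_X_pow (rfl : Q * (1 - X ^ 3) = _) (6 * k + 3)
    rw [show 6 * k + 3 + 3 = 6 * (k + 1) by ring, hS0] at h₂
    rw [h₂, h₁, hS3]
    ring
  induction k with
  | zero => simpa using hQ0
  | succ k ih =>
    rw [hstep, ih]
    push_cast
    ring

end PowerSeries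

/-- For `p = 7`, the sequence `K_{7,n}` of coefficients of `-7x/((1+x)⁷ - 1 - x⁷)` is not
periodic; in particular it is unbounded. -/
theorem stmt_9
    (Q : PowerSeries ℚ)
    (hQ : Q * ((1 + PowerSeries.X) ^ 7 - 1 - PowerSeries.X ^ 7)
        = -(7 : PowerSeries ℚ) * PowerSeries.X) :
    (¬ ∃ T : ℕ, 0 < T ∧ ∀ n : ℕ, PowerSeries.coeff (n + T) Q = PowerSeries.coeff n Q) ∧
    (∀ C : ℚ, ∃ n : ℕ, C < |PowerSeries.coeff n Q|) := by
  have hK := coeff_six_mul_of_mul_eq_neg_one (mul_eq_neg_one_of_mul_one_add_pow_seven_sub hQ)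
  constructor
  · rintro ⟨T, hT, hper⟩
    have hperiodic : Function.Periodic (fun n ↦ coeff n Q) T := hper
    have hrep : coeff (6 * T) Q = coeff (6 * 0) Q := (hperiodic.nat_mul 6).eq
    rw [hK, hK] at hrep
    have : (0 : ℚ) < T := by exact_mod_cast hT
    push_cast at hrep
    linarith
  · intro C
    obtain ⟨k, hk⟩ := exists_nat_gt C
    refine ⟨6 * (k + 1), ?_⟩
    calc C < k := hk
      _ ≤ 2 * ((k + 1 : ℕ) : ℚ) - 1 := by push_cast; linarith
      _ = coeff (6 * (k + 1)) Q := (hK (k + 1)).symm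
      _ ≤ |coeff (6 * (k + 1)) Q| := le_abs_self _
end

section
/- For each fixed n ≥ 1, the limit as the prime p tends to infinity of -n!·K_{p,n}/p^n equals the n-th Bernoulli number B_n. -/
/-!
Dividing the `n`-th coefficient by `p^n` amounts to rescaling `X ↦ X/p`, which turns
`-1/Kser p` into `Σ_j C(p, j+1)/p^(j+1) · X^j`. As `p → ∞` each coefficient of this series tends
to `1/(j+1)!`, the coefficient of `(e^X - 1)/X`. Coefficients of the inverse of a power series
depend continuously on finitely many coefficients of the series, so the `n`-th coefficient of
`-Kser p` rescaled tends to that of `X/(e^X - 1)`, which is `B_n/n!`.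
-/

/-- `Kser p = -p·X/((1+X)^p - 1 - X^p)`, written as `-1/g` where
`(1+X)^p - 1 - X^p = p·X·g(X)` with `g = Σ_j (C(p,j+1)/p)·X^j`. -/
noncomputable def Kser (p : ℕ) : PowerSeries ℚ :=
  -(PowerSeries.mk fun j => (p.choose (j + 1) : ℚ) / p)⁻¹

open Filter Topology Asymptotics PowerSeries

theorem tendsto_choose_div_pow (k : ℕ) :
    Tendsto (fun n : ℕ => (n.choose k : ℚ) / (n : ℚ) ^ k) atTop (𝓝 (k.factorial : ℚ)⁻¹) := by
  rw [Rat.isEmbedding_coe_real.tendsto_nhds_iff]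
  have hequiv : (fun n : ℕ => (n.choose k : ℝ) / (n : ℝ) ^ k) ~[atTop]
      fun n : ℕ => ((n : ℝ) ^ k / k.factorial) / (n : ℝ) ^ k :=
    (isEquivalent_choose k).div IsEquivalent.refl
  have hconst : (fun n : ℕ => ((n : ℝ) ^ k / k.factorial) / (n : ℝ) ^ k) =ᶠ[atTop]
      fun _ => (k.factorial : ℝ)⁻¹ := by
    filter_upwards [eventually_ne_atTop 0] with n hn
    field_simp
  convert hequiv.symm.tendsto_nhds (tendsto_const_nhds.congr' hconst.symm) using 1
  · ext n
    simp
  · simp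

namespace PowerSeries

variable {K : Type*} [Field K]

theorem rescale_inv (a : K) (φ : K⟦X⟧) : rescale a φ⁻¹ = (rescale a φ)⁻¹ := by
  have hconst : constantCoeff (rescale a φ) = constantCoeff φ := by
    simp only [← coeff_zero_eq_constantCoeff_apply, coeff_rescale, pow_zero, one_mul]
  by_cases hφ : constantCoeff φ = 0
  · rw [inv_eq_zero.mpr hφ, inv_eq_zero.mpr (hconst.trans hφ), map_zero]
  · rw [eq_inv_iff_mul_eq_one (hconst ▸ hφ), ← map_mul, PowerSeries.inv_mul_cancel _ hφ, map_one]

theorem tendsto_coeff_inv [TopologicalSpace K] [IsTopologicalDivisionRing K]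
    {α : Type*} {l : Filter α} {f : α → K⟦X⟧} {g : K⟦X⟧} (hg : constantCoeff g ≠ 0)
    (hf : ∀ n, Tendsto (fun a => coeff n (f a)) l (𝓝 (coeff n g))) (n : ℕ) :
    Tendsto (fun a => coeff n (f a)⁻¹) l (𝓝 (coeff n g⁻¹)) := by
  induction n using Nat.strong_induction_on with
  | _ n ih =>
  have hconst : Tendsto (fun a => (constantCoeff (f a))⁻¹) l (𝓝 (constantCoeff g)⁻¹) := by
    simpa only [coeff_zero_eq_constantCoeff_apply] using (hf 0).inv₀ (by simpa using hg)
  simp_rw [coeff_inv n]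
  split_ifs with hn
  · exact hconst
  refine hconst.neg.mul (tendsto_finsetSum _ fun x hx => ?_)
  split_ifs with hlt
  · exact (hf x.1).mul (ih x.2 hlt)
  · exact tendsto_const_nhds

end PowerSeries

theorem exp_sub_one_eq_X_mul (A : Type*) [Ring A] [Algebra ℚ A] :
    exp A - 1 = X * PowerSeries.mk fun n => algebraMap ℚ A ((n + 1).factorial : ℚ)⁻¹ := by
  ext (_ | n)
  · simp
  · simp [coeff_exp, coeff_succ_X_mul]

theorem bernoulliPowerSeries_eq_inv (K : Type*) [Field K] [Algebra ℚ K] :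
    bernoulliPowerSeries K
      = (PowerSeries.mk fun n => algebraMap ℚ K ((n + 1).factorial : ℚ)⁻¹)⁻¹ := by
  rw [eq_inv_iff_mul_eq_one (by simp)]
  apply mul_left_cancel₀ (X_ne_zero (R := K))
  rw [mul_one, mul_left_comm, ← exp_sub_one_eq_X_mul, bernoulliPowerSeries_mul_exp_sub_one]

theorem coeff_Kser_div_pow (p n : ℕ) :
    coeff n (Kser p) / (p : ℚ) ^ n
      = -coeff n (PowerSeries.mk fun j => (p.choose (j + 1) : ℚ) / (p : ℚ) ^ (j + 1))⁻¹ := by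
  have hrescale : (PowerSeries.mk fun j => (p.choose (j + 1) : ℚ) / (p : ℚ) ^ (j + 1))
      = rescale (p : ℚ)⁻¹ (PowerSeries.mk fun j => (p.choose (j + 1) : ℚ) / p) := by
    rw [rescale_mk]
    congr 1
    ext j
    ring
  rw [hrescale, ← rescale_inv, coeff_rescale, Kser, map_neg, inv_pow, neg_div,
    div_eq_inv_mul]

theorem stmt_10_general (n : ℕ) :
    Filter.Tendsto
      (fun p : ℕ =>
        -(Nat.factorial n : ℚ) * PowerSeries.coeff n (Kser p) / (p : ℚ) ^ n)
      (Filter.atTop ⊓ Filter.principal {p : ℕ | p.Prime})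
      (nhds (bernoulli n)) := by
  have hB : coeff n (PowerSeries.mk fun j => ((j + 1).factorial : ℚ)⁻¹)⁻¹
      = bernoulli n / n.factorial := by
    simpa [bernoulliPowerSeries] using congrArg (coeff n) (bernoulliPowerSeries_eq_inv ℚ).symm
  have hcoeff := tendsto_coeff_inv
    (f := fun p : ℕ => PowerSeries.mk fun j => (p.choose (j + 1) : ℚ) / (p : ℚ) ^ (j + 1))
    (g := PowerSeries.mk fun j => ((j + 1).factorial : ℚ)⁻¹) (by simp)
    (fun j => by simpa only [coeff_mk] using tendsto_choose_div_pow (j + 1)) n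
  have hlim := hcoeff.const_mul (n.factorial : ℚ)
  rw [hB, mul_div_cancel₀ _ (Nat.cast_ne_zero.mpr n.factorial_ne_zero)] at hlim
  refine (hlim.mono_left inf_le_left).congr fun p => ?_
  rw [mul_div_assoc, coeff_Kser_div_pow, mul_neg, neg_mul, neg_neg]

/-- For each fixed `n ≥ 1`, the limit as the prime `p` tends to infinity of
`-n!·K_{p,n}/p^n` equals the `n`-th Bernoulli number `B_n`. -/
theorem stmt_10 (n : ℕ) (hn : 1 ≤ n) :
    Filter.Tendsto
      (fun p : ℕ =>
        -(Nat.factorial n : ℚ) * PowerSeries.coeff n (Kser p) / (p : ℚ) ^ n)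
      (Filter.atTop ⊓ Filter.principal {p : ℕ | p.Prime})
      (nhds (bernoulli n)) :=
  stmt_10_general n
end

section
/- For an odd prime p, in the ring ℤ[μ]/((1+μ)^p - 1), one has p·μ = Σ_{n=0}^{N} K_{p,n}·μ^{p+n} for every N with p+N ≥ the nilpotency degree; more precisely, p·μ - Σ_{n=0}^{N} K_{p,n}·μ^{p+n} lies in the ideal generated by μ^{p+N+1} together with ((1+μ)^p - 1), for all N ≥ 0. -/
/-!
Truncating `Q` at order `p + N + 1` turns the relation `p·X + Q·((1+X)^p - 1 - X^p) = 0` into a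
polynomial congruence modulo `X^(p+N+1)`. In `ℤ[X]/((1+X)^p - 1)` the factor `(1+X)^p - 1`
vanishes, leaving `p·μ ≡ Q_{<p+N+1}(μ)·μ^p`, and the coefficients of index `> N` only
contribute multiples of `μ^(p+N+1)`.
-/

open Polynomial
open scoped PowerSeries

namespace PowerSeries

variable {R : Type*}

theorem X_pow_dvd_coe_iff [CommSemiring R] {f : R[X]} {m : ℕ} :
    (PowerSeries.X : R⟦X⟧) ^ m ∣ (f : R⟦X⟧) ↔ Polynomial.X ^ m ∣ f := by
  simp only [PowerSeries.X_pow_dvd_iff, Polynomial.X_pow_dvd_iff, Polynomial.coeff_coe]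

theorem X_pow_dvd_sub_trunc [CommRing R] (f : R⟦X⟧) (m : ℕ) :
    PowerSeries.X ^ m ∣ f - (trunc m f : R⟦X⟧) :=
  ⟨_, sub_eq_iff_eq_add.mpr (eq_X_pow_mul_shift_add_trunc m f)⟩

theorem X_pow_dvd_trunc_sub_trunc [Ring R] (f : R⟦X⟧) {m n : ℕ} (hmn : m ≤ n) :
    Polynomial.X ^ m ∣ trunc n f - trunc m f := by
  rw [Polynomial.X_pow_dvd_iff]
  intro d hd
  simp [coeff_trunc, hd, hd.trans_le hmn]

theorem X_pow_dvd_add_trunc_mul [CommRing R] {A B : R[X]} {f : R⟦X⟧}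
    (h : (A : R⟦X⟧) + f * B = 0) (m : ℕ) : Polynomial.X ^ m ∣ A + trunc m f * B := by
  rw [← X_pow_dvd_coe_iff]
  have hA : ((A + trunc m f * B : R[X]) : R⟦X⟧) = -((f - trunc m f) * B) := by
    push_cast
    linear_combination h
  rw [hA, dvd_neg]
  exact (X_pow_dvd_sub_trunc f m).mul_right _

theorem map_trunc_eq_sum_range [Semiring R] {S : Type*} [Semiring S] (φ : R[X] →+* S)
    (f : R⟦X⟧) (m : ℕ) :
    φ (trunc m f) =
      ∑ i ∈ Finset.range m, φ (Polynomial.C (coeff i f)) * φ Polynomial.X ^ i := by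
  conv_lhs => rw [← eval₂_C_X (p := trunc m f)]
  rw [hom_eval₂, eval₂_trunc_eq_sum_range]
  rfl

end PowerSeries

open PowerSeries (trunc X_pow_dvd_add_trunc_mul X_pow_dvd_trunc_sub_trunc
  map_trunc_eq_sum_range)

theorem stmt_11_general (p : ℕ)
    (Q : PowerSeries ℤ)
    (hQ : (p : PowerSeries ℤ) * PowerSeries.X
        + Q * ((1 + PowerSeries.X) ^ p - 1 - PowerSeries.X ^ p) = 0) :
    ∀ N : ℕ,
      (p : Polynomial ℤ ⧸ Ideal.span {((1 + Polynomial.X) ^ p - 1 : Polynomial ℤ)}) *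
          Ideal.Quotient.mk (Ideal.span {((1 + Polynomial.X) ^ p - 1 : Polynomial ℤ)})
            Polynomial.X
        - ∑ n ∈ Finset.range (N + 1),
            (PowerSeries.coeff (R := ℤ) n Q :
                Polynomial ℤ ⧸ Ideal.span {((1 + Polynomial.X) ^ p - 1 : Polynomial ℤ)}) *
              (Ideal.Quotient.mk (Ideal.span {((1 + Polynomial.X) ^ p - 1 : Polynomial ℤ)})
                  Polynomial.X) ^ (p + n)
      ∈ Ideal.span
          {(Ideal.Quotient.mk (Ideal.span {((1 + Polynomial.X) ^ p - 1 : Polynomial ℤ)})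
              Polynomial.X) ^ (p + N + 1)} := by
  intro N
  set φ := Ideal.Quotient.mk (Ideal.span {((1 + Polynomial.X) ^ p - 1 : Polynomial ℤ)})
  set G : ℤ[X] := (p : ℤ[X]) * X - trunc (N + 1) Q * X ^ p
    + trunc (p + N + 1) Q * ((1 + X) ^ p - 1) with hG_def
  have hQ' : (((p : ℤ[X]) * X : ℤ[X]) : ℤ⟦X⟧)
      + Q * (((1 + X) ^ p - 1 - X ^ p : ℤ[X]) : ℤ⟦X⟧) = 0 := by
    have hp : ((p : ℤ[X]) : ℤ⟦X⟧) = p := map_natCast Polynomial.coeToPowerSeries.ringHom p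
    simpa only [coe_mul, coe_sub, coe_pow, coe_add, coe_one, coe_X, hp] using hQ
  have hG : X ^ (p + N + 1) ∣ G := by
    have hrel := X_pow_dvd_add_trunc_mul hQ' (p + N + 1)
    have htail : X ^ (p + N + 1) ∣ (trunc (p + N + 1) Q - trunc (N + 1) Q) * X ^ p := by
      rw [show p + N + 1 = N + 1 + p by ring, pow_add]
      exact mul_dvd_mul (X_pow_dvd_trunc_sub_trunc Q (by omega)) dvd_rfl
    convert dvd_add hrel htail using 1
    ring
  have hφG : φ G = p * φ X
      - ∑ n ∈ Finset.range (N + 1), (PowerSeries.coeff n Q : _) * φ X ^ (p + n) := by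
    rw [hG_def, map_add, map_sub, map_mul, map_mul, map_mul, Ideal.Quotient.mk_singleton_self,
      mul_zero, add_zero, map_natCast, map_trunc_eq_sum_range, Finset.sum_mul]
    refine congrArg _ (Finset.sum_congr rfl fun n _ => ?_)
    rw [← RingHom.comp_apply, eq_intCast, map_pow, pow_add]
    ring
  rw [← hφG, Ideal.mem_span_singleton, ← map_pow]
  exact map_dvd φ hG

/-- For an odd prime `p`, in the ring `ℤ[μ]/((1+μ)^p - 1)`, the element
`p·μ - Σ_{n=0}^{N} K_{p,n}·μ^{p+n}` lies in the ideal generated by `μ^{p+N+1}`, for all `N ≥ 0`.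
Here `K_{p,n}` is the `n`-th coefficient of the integral power series `Q` with
`p·X + Q·((1+X)^p - 1 - X^p) = 0`, i.e. `Q = -p·X/((1+X)^p - 1 - X^p)`. -/
theorem stmt_11 (p : ℕ) (hp : p.Prime) (hodd : Odd p)
    (Q : PowerSeries ℤ)
    (hQ : (p : PowerSeries ℤ) * PowerSeries.X
        + Q * ((1 + PowerSeries.X) ^ p - 1 - PowerSeries.X ^ p) = 0) :
    ∀ N : ℕ,
      (p : Polynomial ℤ ⧸ Ideal.span {((1 + Polynomial.X) ^ p - 1 : Polynomial ℤ)}) *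
          Ideal.Quotient.mk (Ideal.span {((1 + Polynomial.X) ^ p - 1 : Polynomial ℤ)})
            Polynomial.X
        - ∑ n ∈ Finset.range (N + 1),
            (PowerSeries.coeff (R := ℤ) n Q :
                Polynomial ℤ ⧸ Ideal.span {((1 + Polynomial.X) ^ p - 1 : Polynomial ℤ)}) *
              (Ideal.Quotient.mk (Ideal.span {((1 + Polynomial.X) ^ p - 1 : Polynomial ℤ)})
                  Polynomial.X) ^ (p + n)
      ∈ Ideal.span
          {(Ideal.Quotient.mk (Ideal.span {((1 + Polynomial.X) ^ p - 1 : Polynomial ℤ)})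
              Polynomial.X) ^ (p + N + 1)} :=
  stmt_11_general p Q hQ
end

section
/- For a prime p ≥ 7, M_{p,2} = -(p²-1)(7p²+17)/5760. -/
/-!
Dividing the relation by `x` gives `Q · (f_p - x^((p-1)/2)) = -p`. For `p ≥ 7` the truncated
series `f_p - x^((p-1)/2)` agrees with `f_p` up to degree `2`, so `M_{p,2}` is read off from the
order-two expansion of `-p / f_p`, which only involves the first three coefficients of `f_p`.
-/

/-- The relation polynomial for `KO(BZ_p)`:
`f_p(x) = p + Σ_{j=1}^{(p-3)/2} [p·(p²-1²)(p²-3²)···(p²-(2j-1)²)/(2^{2j}·(2j+1)!)]·x^j + x^{(p-1)/2}`,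
viewed as a power series over `ℚ`. -/
noncomputable def fser (p : ℕ) : PowerSeries ℚ :=
  PowerSeries.mk fun j =>
    if j = 0 then (p : ℚ)
    else if j = (p - 1) / 2 then 1
    else if j ≤ (p - 3) / 2 then
      ((p : ℚ) * ∏ i ∈ Finset.range j, ((p : ℚ) ^ 2 - (2 * (i : ℚ) + 1) ^ 2)) /
        (2 ^ (2 * j) * Nat.factorial (2 * j + 1))
    else 0

open PowerSeries

theorem PowerSeries.coeff_two_eq_of_mul_eq_C {K : Type*} [Field K] {Q g : K⟦X⟧} {c : K}
    (hg : coeff 0 g ≠ 0) (h : Q * g = C c) :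
    coeff 2 Q = c * (coeff 1 g ^ 2 - coeff 0 g * coeff 2 g) / coeff 0 g ^ 3 := by
  have h0 := congrArg (coeff 0) h
  have h1 := congrArg (coeff 1) h
  have h2 := congrArg (coeff 2) h
  simp only [coeff_C, coeff_mul, Finset.Nat.sum_antidiagonal_eq_sum_range_succ_mk,
    Finset.sum_range_succ, Finset.sum_range_zero] at h0 h1 h2
  norm_num at h0 h1 h2
  rw [coeff_zero_eq_constantCoeff_apply] at hg ⊢
  rw [eq_div_iff (pow_ne_zero 3 hg)]
  linear_combination constantCoeff g ^ 2 * h2 - constantCoeff g * coeff 1 g * h1 +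
    (coeff 1 g ^ 2 - constantCoeff g * coeff 2 g) * h0

theorem mul_fser_sub_X_pow_eq_C {p : ℕ} {Q : ℚ⟦X⟧} (hp : 0 < p)
    (hQ : Q * (X * fser p - X ^ ((p + 1) / 2)) = -(p : ℚ⟦X⟧) * X) :
    Q * (fser p - X ^ ((p - 1) / 2)) = C (-(p : ℚ)) := by
  have hk : (p + 1) / 2 = (p - 1) / 2 + 1 := by omega
  apply mul_left_cancel₀ (X_ne_zero (R := ℚ))
  rw [hk, pow_succ'] at hQ
  rw [map_neg, map_natCast]
  linear_combination hQ

theorem coeff_fser_sub_X_pow_of_lt {p n : ℕ} (hn : n < (p - 1) / 2) :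
    coeff n (fser p - X ^ ((p - 1) / 2)) = coeff n (fser p) := by
  rw [map_sub, coeff_X_pow, if_neg hn.ne, sub_zero]

theorem coeff_fser_zero (p : ℕ) : coeff 0 (fser p) = p := by
  rw [fser, coeff_mk, if_pos rfl]

theorem coeff_fser_of_le {p j : ℕ} (hj : 0 < j) (hjp : j ≤ (p - 3) / 2) :
    coeff j (fser p) = ((p : ℚ) * ∏ i ∈ Finset.range j, ((p : ℚ) ^ 2 - (2 * (i : ℚ) + 1) ^ 2)) /
      (2 ^ (2 * j) * Nat.factorial (2 * j + 1)) := by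
  rw [fser, coeff_mk, if_neg hj.ne', if_neg (by omega), if_pos hjp]

theorem coeff_fser_one {p : ℕ} (hp : 5 ≤ p) :
    coeff 1 (fser p) = p * ((p : ℚ) ^ 2 - 1) / 24 := by
  rw [coeff_fser_of_le one_pos (by omega), Finset.prod_range_one]
  norm_num [Nat.factorial]

theorem coeff_fser_two {p : ℕ} (hp : 7 ≤ p) :
    coeff 2 (fser p) = p * (((p : ℚ) ^ 2 - 1) * ((p : ℚ) ^ 2 - 9)) / 1920 := by
  rw [coeff_fser_of_le two_pos (by omega), Finset.prod_range, Fin.prod_univ_two]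
  norm_num [Nat.factorial]

theorem stmt_16_general (p : ℕ) (hp7 : 7 ≤ p)
    (Q : PowerSeries ℚ)
    (hQ : Q * (PowerSeries.X * fser p - PowerSeries.X ^ ((p + 1) / 2))
        = -(p : PowerSeries ℚ) * PowerSeries.X) :
    PowerSeries.coeff 2 Q =
      -(((p : ℚ) ^ 2 - 1) * (7 * (p : ℚ) ^ 2 + 17) / 5760) := by
  have hg0 := coeff_fser_sub_X_pow_of_lt (p := p) (n := 0) (by omega)
  have hg1 := coeff_fser_sub_X_pow_of_lt (p := p) (n := 1) (by omega)
  have hg2 := coeff_fser_sub_X_pow_of_lt (p := p) (n := 2) (by omega)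
  rw [coeff_fser_zero] at hg0
  rw [coeff_fser_one (by omega)] at hg1
  rw [coeff_fser_two hp7] at hg2
  have hp : (p : ℚ) ≠ 0 := by positivity
  rw [coeff_two_eq_of_mul_eq_C (hg0 ▸ hp) (mul_fser_sub_X_pow_eq_C (by omega) hQ), hg0, hg1, hg2]
  field_simp
  ring

/-- For a prime `p ≥ 7`, `M_{p,2} = -(p²-1)(7p²+17)/5760`. -/
theorem stmt_16 (p : ℕ) (hp : p.Prime) (hp7 : 7 ≤ p)
    (Q : PowerSeries ℚ)
    (hQ : Q * (PowerSeries.X * fser p - PowerSeries.X ^ ((p + 1) / 2))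
        = -(p : PowerSeries ℚ) * PowerSeries.X) :
    PowerSeries.coeff 2 Q =
      -(((p : ℚ) ^ 2 - 1) * (7 * (p : ℚ) ^ 2 + 17) / 5760) :=
  stmt_16_general p hp7 Q hQ
end

section
/- For an odd prime p, all coefficients of the polynomial f_p(x) = p + Σ_{j=1}^{(p-3)/2} [p·(p²-1²)(p²-3²)···(p²-(2j-1)²)/(2^{2j}·(2j+1)!)]·x^j + x^{(p-1)/2} are integers; i.e., 2^{2j}·(2j+1)! divides p·(p²-1²)(p²-3²)···(p²-(2j-1)²) for 1 ≤ j ≤ (p-3)/2. -/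
/-!
Write `p = 2m + 1`. Then `p² - (2i+1)² = 4(m - i)(m + i + 1)`, so the product is `4^j` times
`(m-j+1)(m-j+2)⋯(m+j)`, a product of `2j` consecutive integers. Splitting `2m + 1` as
`(m + j + 1) + (m - j)` turns `(2m + 1)` times it into a sum of two products of `2j + 1`
consecutive integers, each divisible by `(2j+1)!`.
-/

open Finset
open scoped Nat

namespace Nat

theorem prod_range_sub_mul_add_succ_eq_descFactorial {m j : ℕ} (h : j ≤ m) :
    ∏ i ∈ range j, (m - i) * (m + i + 1) = (m + j).descFactorial (2 * j) := by
  induction j with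
  | zero => simp
  | succ j ih =>
    rw [prod_range_succ, ih (by omega), show 2 * (j + 1) = 2 * j + 1 + 1 by ring,
      show m + (j + 1) = m + j + 1 by ring, succ_descFactorial_succ, descFactorial_succ,
      show m + j - 2 * j = m - j by omega]
    ring

theorem factorial_dvd_two_mul_add_one_mul_descFactorial {m j : ℕ} (h : j ≤ m) :
    (2 * j + 1)! ∣ (2 * m + 1) * (m + j).descFactorial (2 * j) := by
  have hsplit : (2 * m + 1) * (m + j).descFactorial (2 * j) =
      (m + j + 1).descFactorial (2 * j + 1) + (m + j).descFactorial (2 * j + 1) := by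
    rw [succ_descFactorial_succ, descFactorial_succ, show m + j - 2 * j = m - j by omega,
      ← add_mul, show m + j + 1 + (m - j) = 2 * m + 1 by omega]
  rw [hsplit]
  exact dvd_add (factorial_dvd_descFactorial _ _) (factorial_dvd_descFactorial _ _)

end Nat

theorem prod_range_odd_sq_sub_odd_sq {m j : ℕ} (h : j ≤ m) :
    ∏ i ∈ range j, ((2 * (m : ℤ) + 1) ^ 2 - (2 * (i : ℤ) + 1) ^ 2) =
      4 ^ j * ((m + j).descFactorial (2 * j) : ℤ) := by
  rw [← Nat.prod_range_sub_mul_add_succ_eq_descFactorial h, Nat.cast_prod, ← card_range j,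
    ← prod_const, card_range, ← prod_mul_distrib]
  refine prod_congr rfl fun i hi => ?_
  rw [Nat.cast_mul, Nat.cast_sub (by simp at hi; omega)]
  push_cast
  ring

theorem stmt_19_general (p : ℕ) (hodd : Odd p) :
    ∀ j : ℕ, 1 ≤ j → j ≤ (p - 3) / 2 →
      ((2 : ℤ) ^ (2 * j) * (Nat.factorial (2 * j + 1) : ℤ)) ∣
        ((p : ℤ) * ∏ i ∈ Finset.range j, ((p : ℤ) ^ 2 - (2 * (i : ℤ) + 1) ^ 2)) := by
  intro j _ hj
  obtain ⟨m, rfl⟩ := hodd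
  have hjm : j ≤ m := by omega
  obtain ⟨c, hc⟩ := Nat.factorial_dvd_two_mul_add_one_mul_descFactorial hjm
  refine ⟨c, ?_⟩
  have hcZ : (2 * (m : ℤ) + 1) * ((m + j).descFactorial (2 * j) : ℤ) = (2 * j + 1)! * c := by
    exact_mod_cast hc
  push_cast
  rw [prod_range_odd_sq_sub_odd_sq hjm, pow_mul, mul_left_comm, hcZ]
  ring

/-- For an odd prime `p`, all coefficients of the polynomial `f_p` are integers; i.e.,
`2^{2j}·(2j+1)!` divides `p·(p²-1²)(p²-3²)···(p²-(2j-1)²)` for `1 ≤ j ≤ (p-3)/2`. -/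
theorem stmt_19 (p : ℕ) (hp : p.Prime) (hodd : Odd p) :
    ∀ j : ℕ, 1 ≤ j → j ≤ (p - 3) / 2 →
      ((2 : ℤ) ^ (2 * j) * (Nat.factorial (2 * j + 1) : ℤ)) ∣
        ((p : ℤ) * ∏ i ∈ Finset.range j, ((p : ℤ) ^ 2 - (2 * (i : ℤ) + 1) ^ 2)) :=
  stmt_19_general p hodd
end
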